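/- Let G be a connected finite simple graph with B(G) ≠ ∅ and Ω(G) ≠ ∅, and let p > 1. Let v_0 be a pendant vertex of G whose unique neighbor v_j has deg_G(v_j) ≥ 3, and let G' = G − v_0 be the graph obtained from G by deleting v_0 and its incident edge (so that B(G') = B(G) \ {v_0} and Ω(G') = Ω(G)). Then λ_{1,p}(G') ≤ λ_{1,p}(G). -/

import Mathlib

attribute [local instance] Classical.propDecidable

open Finset

/-- The degree of a vertex `x` in a finite simple graph `G`. -/
noncomputable def deg {V : Type*} [Fintype V] (G : SimpleGraph V) (x : V) : ℕ :=
  (Finset.univ.filter (fun y => G.Adj x y)).card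

/-- The `p`-energy `‖df‖_{p,G}^p = Σ_{{x,y} ∈ E(G)} |f x - f y|^p`
(each unordered edge counted once, i.e. half the double sum). -/
noncomputable def energy {V : Type*} [Fintype V] (G : SimpleGraph V) (p : ℝ) (f : V → ℝ) : ℝ :=
  (∑ x : V, ∑ y : V, if G.Adj x y then |f x - f y| ^ p else 0) / 2

/-- The weighted `p`-norm `‖f‖_{p,G}^p = Σ_x |f x|^p · deg x`. -/
noncomputable def pnorm {V : Type*} [Fintype V] (G : SimpleGraph V) (p : ℝ) (f : V → ℝ) : ℝ :=
  ∑ x : V, |f x| ^ p * (deg G x : ℝ)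

/-- The `p`-Rayleigh quotient `R_{p,G}[f]`. -/
noncomputable def rayleigh {V : Type*} [Fintype V] (G : SimpleGraph V) (p : ℝ) (f : V → ℝ) : ℝ :=
  energy G p f / pnorm G p f

/-- The first `p`-Dirichlet eigenvalue `λ_{1,p}(G)`: the infimum of Rayleigh quotients of
nonzero functions vanishing on the boundary `B(G)` (the set of pendant vertices). -/
noncomputable def lambda1 {V : Type*} [Fintype V] (G : SimpleGraph V) (p : ℝ) : ℝ :=
  sInf { r : ℝ | ∃ f : V → ℝ, (∀ x : V, deg G x = 1 → f x = 0) ∧ f ≠ 0 ∧ r = rayleigh G p f }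

/-- The number of edges with exactly one endpoint in `U`. -/
noncomputable def cutCard {V : Type*} [Fintype V] (G : SimpleGraph V) (U : Finset V) : ℕ :=
  ∑ x ∈ U, (Finset.univ.filter (fun y => G.Adj x y ∧ y ∉ U)).card

/-- The Dirichlet Cheeger constant `h_D(G)`. -/
noncomputable def cheeger {V : Type*} [Fintype V] (G : SimpleGraph V) : ℝ :=
  sInf { r : ℝ | ∃ U : Finset V, U.Nonempty ∧ (∀ x ∈ U, deg G x ≠ 1) ∧
    r = (cutCard G U : ℝ) / ∑ x ∈ U, (deg G x : ℝ) }

/-- The tadpole graph `T_{n,i}` on vertices `0, …, n-1` (vertex `k-1` representing `t_k`):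
edges between consecutive vertices together with the edge `t_1 ∼ t_i`. -/
def tadpole (n i : ℕ) : SimpleGraph (Fin n) :=
  SimpleGraph.fromRel (fun a b => b.val = a.val + 1 ∨ (a.val = 0 ∧ b.val = i - 1))

/-- The path graph on `n` vertices. -/
def pathG (n : ℕ) : SimpleGraph (Fin n) :=
  SimpleGraph.fromRel (fun a b => b.val = a.val + 1)

/-!
Restricting an admissible `f` on `G` (so `f v₀ = 0`) to `G - v₀` removes the edge term
`a = |f vj|^p` from the energy and, as `deg vj` drops by one, the same `a` from the norm.
Hence `R_{G-v₀}[f] = (E - a) / (N - a) ≤ E / N = R_G[f]` whenever `E ≤ N`. If instead `E > N`,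
then `R_G[f] > 1`, while the indicator of `vj`, still interior in `G - v₀` because
`deg vj ≥ 3`, has Rayleigh quotient `1`.
-/

section

variable {V : Type*} [Fintype V]

lemma sum_subtype_ne_add {M : Type*} [AddCommMonoid M] (v : V) (g : V → M) :
    ∑ x : {x : V | x ≠ v}, g x + g v = ∑ x, g x := by
  rw [← Finset.sum_subtype (univ.erase v) (by simp) g, Finset.sum_erase_add _ _ (mem_univ v)]

lemma energy_nonneg (G : SimpleGraph V) (p : ℝ) (f : V → ℝ) : 0 ≤ energy G p f := by
  unfold energy
  positivity

lemma pnorm_nonneg (G : SimpleGraph V) (p : ℝ) (f : V → ℝ) : 0 ≤ pnorm G p f := by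
  unfold pnorm
  positivity

lemma energy_zero (G : SimpleGraph V) {p : ℝ} (hp : p ≠ 0) : energy G p 0 = 0 := by
  simp [energy, Real.zero_rpow hp]

lemma pnorm_zero (G : SimpleGraph V) {p : ℝ} (hp : p ≠ 0) : pnorm G p 0 = 0 := by
  simp [pnorm, Real.zero_rpow hp]

lemma deg_induce_ne_add (G : SimpleGraph V) (v : V) (x : {x : V | x ≠ v}) :
    deg (G.induce {x | x ≠ v}) x + (if G.Adj x v then 1 else 0) = deg G x := by
  simp only [deg, card_filter]
  exact sum_subtype_ne_add v (fun y => if G.Adj x y then 1 else 0)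

lemma energy_induce_ne (G : SimpleGraph V) (p : ℝ) (f : V → ℝ) (v : V) :
    energy (G.induce {x | x ≠ v}) p (fun x => f x) =
      energy G p f - ∑ y, if G.Adj v y then |f v - f y| ^ p else 0 := by
  set e : V → V → ℝ := fun x y => if G.Adj x y then |f x - f y| ^ p else 0
  have he_symm : ∀ x, e x v = e v x := fun x => by
    simp only [e, G.adj_comm, abs_sub_comm]
  have he_self : e v v = 0 := by simp [e]
  have hsplit : ∑ x, ∑ y, e x y =
      ∑ x : {x : V | x ≠ v}, ∑ y : {x : V | x ≠ v}, e x y + 2 * ∑ y, e v y := by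
    rw [← sum_subtype_ne_add v (fun x => ∑ y, e x y)]
    simp only [← sum_subtype_ne_add v (e _), sum_add_distrib, he_symm, he_self]
    ring
  change (∑ x : {x : V | x ≠ v}, ∑ y : {x : V | x ≠ v}, e x y) / 2 = (∑ x, ∑ y, e x y) / 2 - _
  rw [hsplit]
  ring

lemma pnorm_induce_ne (G : SimpleGraph V) (p : ℝ) (f : V → ℝ) (v : V) :
    pnorm (G.induce {x | x ≠ v}) p (fun x => f x) =
      pnorm G p f - |f v| ^ p * deg G v - ∑ y, if G.Adj v y then |f y| ^ p else 0 := by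
  set g : V → ℝ := fun x => if G.Adj v x then |f x| ^ p else 0
  have hdeg : ∀ x : {x : V | x ≠ v}, |f x| ^ p * (deg (G.induce {x | x ≠ v}) x : ℝ) =
      |f x| ^ p * deg G x - g x := fun x => by
    rw [← deg_induce_ne_add G v x, G.adj_comm]
    split_ifs <;> simp [g, *, mul_add]
  simp only [pnorm, hdeg, sum_sub_distrib]
  rw [← sum_subtype_ne_add v g, ← sum_subtype_ne_add v (fun x => |f x| ^ p * (deg G x : ℝ))]
  simp [g]

lemma rayleigh_nonneg (G : SimpleGraph V) (p : ℝ) (f : V → ℝ) : 0 ≤ rayleigh G p f :=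
  div_nonneg (energy_nonneg G p f) (pnorm_nonneg G p f)

lemma rayleigh_single (G : SimpleGraph V) {p : ℝ} (hp : p ≠ 0) {w : V} (hw : deg G w ≠ 0) :
    rayleigh G p (Pi.single w 1) = 1 := by
  set δ : V → ℝ := Pi.single w 1
  have hδw : δ w = 1 := Pi.single_eq_same w 1
  have hδ : ∀ y, G.Adj w y → δ y = 0 := fun y hy => Pi.single_eq_of_ne hy.ne' _
  have hres : (fun x : {x : V | x ≠ w} => δ x) = 0 := funext fun x => Pi.single_eq_of_ne x.2 _
  have hE_sum : ∑ y, (if G.Adj w y then |δ w - δ y| ^ p else 0) = deg G w := by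
    rw [deg, card_eq_sum_ones, Nat.cast_sum, sum_filter]
    refine sum_congr rfl fun y _ => ?_
    split_ifs with h
    · simp [hδw, hδ y h]
    · rfl
  have hN_sum : ∑ y, (if G.Adj w y then |δ y| ^ p else 0) = 0 := by
    refine sum_eq_zero fun y _ => ?_
    split_ifs with h
    · simp [hδ y h, Real.zero_rpow hp]
    · rfl
  have hE := energy_induce_ne G p δ w
  have hN := pnorm_induce_ne G p δ w
  rw [hres, energy_zero _ hp, hE_sum] at hE
  rw [hres, pnorm_zero _ hp, hN_sum, hδw, abs_one, Real.one_rpow, one_mul] at hN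
  have hdeg : (deg G w : ℝ) ≠ 0 := Nat.cast_ne_zero.mpr hw
  rw [rayleigh, div_eq_one_iff_eq (by intro h; apply hdeg; linarith)]
  linarith

lemma lambda1_le_rayleigh {G : SimpleGraph V} {p : ℝ} {f : V → ℝ}
    (hfB : ∀ x, deg G x = 1 → f x = 0) (hf : f ≠ 0) : lambda1 G p ≤ rayleigh G p f :=
  csInf_le ⟨0, by rintro _ ⟨g, -, -, rfl⟩; exact rayleigh_nonneg G p g⟩ ⟨f, hfB, hf, rfl⟩

lemma le_lambda1 {G : SimpleGraph V} {p c : ℝ} {w : V} (hw : deg G w ≠ 1)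
    (h : ∀ f : V → ℝ, (∀ x, deg G x = 1 → f x = 0) → f ≠ 0 → c ≤ rayleigh G p f) :
    c ≤ lambda1 G p := by
  refine le_csInf ⟨_, Pi.single w 1, fun x hx => ?_, by simp, rfl⟩ ?_
  · exact Pi.single_eq_of_ne (by rintro rfl; exact hw hx) _
  · rintro _ ⟨f, hfB, hf, rfl⟩
    exact h f hfB hf

lemma lambda1_le_one (G : SimpleGraph V) {p : ℝ} (hp : p ≠ 0) {w : V} (hw₁ : deg G w ≠ 1)
    (hw₀ : deg G w ≠ 0) : lambda1 G p ≤ 1 := by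
  refine rayleigh_single G hp hw₀ ▸ lambda1_le_rayleigh (fun x hx => ?_) (by simp)
  exact Pi.single_eq_of_ne (by rintro rfl; exact hw₁ hx) _

lemma adj_iff_of_deg_eq_one {G : SimpleGraph V} {v w : V} (hv : deg G v = 1) (hvw : G.Adj v w)
    (y : V) : G.Adj v y ↔ y = w := by
  obtain ⟨u, hu⟩ := card_eq_one.mp hv
  have key : ∀ y, G.Adj v y ↔ y = u := fun y => by
    simpa using congrArg (y ∈ ·) hu
  rw [key, (key w).mp hvw]

section Pendant

variable {G : SimpleGraph V} {v₀ vj : V}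

lemma deg_induce_ne_pendant_add (h₀ : deg G v₀ = 1) (hadj : G.Adj v₀ vj)
    (x : {x : V | x ≠ v₀}) :
    deg (G.induce {x | x ≠ v₀}) x + (if (x : V) = vj then 1 else 0) = deg G x := by
  simpa only [G.adj_comm _ v₀, adj_iff_of_deg_eq_one h₀ hadj] using deg_induce_ne_add G v₀ x

lemma energy_induce_ne_pendant (h₀ : deg G v₀ = 1) (hadj : G.Adj v₀ vj) (p : ℝ) {f : V → ℝ}
    (hf : f v₀ = 0) :
    energy (G.induce {x | x ≠ v₀}) p (fun x => f x) = energy G p f - |f vj| ^ p := by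
  simp [energy_induce_ne, adj_iff_of_deg_eq_one h₀ hadj, hf]

lemma pnorm_induce_ne_pendant (h₀ : deg G v₀ = 1) (hadj : G.Adj v₀ vj) {p : ℝ} (hp : p ≠ 0)
    {f : V → ℝ} (hf : f v₀ = 0) :
    pnorm (G.induce {x | x ≠ v₀}) p (fun x => f x) = pnorm G p f - |f vj| ^ p := by
  simp [pnorm_induce_ne, adj_iff_of_deg_eq_one h₀ hadj, hf, Real.zero_rpow hp]

lemma deg_eq_one_of_deg_induce_ne_pendant_eq_one (h₀ : deg G v₀ = 1) (hadj : G.Adj v₀ vj)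
    (hj : deg G vj ≠ 2) {x : {x : V | x ≠ v₀}}
    (hx : deg (G.induce {x | x ≠ v₀}) x = 1) : deg G x = 1 := by
  have hdeg := deg_induce_ne_pendant_add h₀ hadj x
  rcases eq_or_ne (x : V) vj with h | h
  · rw [if_pos h, h] at hdeg
    omega
  · rw [if_neg h] at hdeg
    omega

end Pendant

lemma sub_div_sub_le_div_or_one_le_div {E N a : ℝ} (ha : 0 ≤ a) (haE : a ≤ E) (haN : a ≤ N) :
    (E - a) / (N - a) ≤ E / N ∨ 1 ≤ E / N := by
  rcases haN.eq_or_lt with rfl | haN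
  · left
    rw [sub_self, div_zero]
    exact div_nonneg (ha.trans haE) ha
  rcases le_or_gt N E with hNE | hEN
  · exact Or.inr ((one_le_div (ha.trans_lt haN)).mpr hNE)
  · left
    rw [div_le_div_iff₀ (sub_pos.mpr haN) (ha.trans_lt haN)]
    nlinarith

end

theorem lambda1_delete_pendant_general {V : Type*} [Fintype V] (G : SimpleGraph V)
    (p : ℝ) (hp : 1 < p)
    (v₀ vj : V) (h₀ : deg G v₀ = 1) (hadj : G.Adj v₀ vj) (hj : 3 ≤ deg G vj) :
    lambda1 (G.induce {x : V | x ≠ v₀}) p ≤ lambda1 G p := by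
  have hp₀ : p ≠ 0 := (zero_lt_one.trans hp).ne'
  set G' := G.induce {x : V | x ≠ v₀}
  have hdeg_vj : deg G' ⟨vj, hadj.ne'⟩ + 1 = deg G vj := by
    simpa using deg_induce_ne_pendant_add h₀ hadj ⟨vj, hadj.ne'⟩
  refine le_lambda1 (w := vj) (by omega) fun f hfB hf => ?_
  have hf₀ : f v₀ = 0 := hfB v₀ h₀
  have hE := energy_induce_ne_pendant h₀ hadj p hf₀
  have hN := pnorm_induce_ne_pendant h₀ hadj hp₀ hf₀
  have hfB' : ∀ x, deg G' x = 1 → f x = 0 := fun x hx =>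
    hfB x (deg_eq_one_of_deg_induce_ne_pendant_eq_one h₀ hadj (by omega) hx)
  have hf' : (fun x : {x : V | x ≠ v₀} => f x) ≠ 0 := by
    obtain ⟨x, hx⟩ := Function.ne_iff.mp hf
    exact Function.ne_iff.mpr ⟨⟨x, by rintro rfl; exact hx hf₀⟩, hx⟩
  rcases sub_div_sub_le_div_or_one_le_div (E := energy G p f) (N := pnorm G p f)
    (by positivity : 0 ≤ |f vj| ^ p)
    (by linarith [energy_nonneg G' p (fun x => f x)])
    (by linarith [pnorm_nonneg G' p (fun x => f x)]) with h | h
  · calc lambda1 G' p ≤ rayleigh G' p (fun x => f x) := lambda1_le_rayleigh hfB' hf'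
      _ ≤ rayleigh G p f := by rwa [rayleigh, rayleigh, hE, hN]
  · exact (lambda1_le_one G' hp₀ (w := ⟨vj, hadj.ne'⟩) (by omega) (by omega)).trans h

/-- Deleting a pendant vertex `v₀` whose unique neighbor `v_j` has degree at least `3`
does not increase the first `p`-Dirichlet eigenvalue. -/
theorem lambda1_delete_pendant {V : Type*} [Fintype V] (G : SimpleGraph V)
    (hconn : G.Connected) (hB : ∃ x : V, deg G x = 1) (hΩ : ∃ x : V, deg G x ≠ 1)
    (p : ℝ) (hp : 1 < p)
    (v₀ vj : V) (h₀ : deg G v₀ = 1) (hadj : G.Adj v₀ vj) (hj : 3 ≤ deg G vj) :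
    lambda1 (G.induce {x : V | x ≠ v₀}) p ≤ lambda1 G p :=
  lambda1_delete_pendant_general G p hp v₀ vj h₀ hadj hj
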